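/- Let f be a convex function on ℝ with left-derivative f'_- and second derivative measure f''. Then for all a, b ∈ ℝ (not necessarily ordered): f(b) − f(a) = f'_-(a)(b−a) + ∫_ℝ 1_{[a∧b, a∨b)}(u) |b−u| f''(du). -/

import Mathlib

/-!
The left derivative of a convex function is monotone and satisfies the fundamental theorem of
calculus. For `a ≤ b` this gives
`f b - f a - f'(a) (b - a) = ∫_a^b (f'(t) - f'(a)) dt = ∫_a^b μ[a, t) dt`,
which is `∫_{[a, b)} (b - u) dμ(u)` by Fubini on `{(u, t) | a ≤ u < t ≤ b}`.
For `b ≤ a` the same computation gives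
`∫_b^a (f'(a) - f'(t)) dt = ∫_b^a μ[t, a) dt = ∫_{[b, a)} (u - b) dμ(u)`,
now by Fubini on `{(u, t) | b < t ≤ u < a}`.
-/

open Filter Set MeasureTheory

theorem intervalIntegral.integral_eq_sub_of_hasDeriv_left_of_le {E : Type*}
    [NormedAddCommGroup E] [NormedSpace ℝ E] [CompleteSpace E] {f f' : ℝ → E} {a b : ℝ}
    (hab : a ≤ b) (hcont : ContinuousOn f (Icc a b))
    (hderiv : ∀ x ∈ Ioo a b, HasDerivWithinAt f (f' x) (Iio x) x)
    (hint : IntervalIntegrable f' volume a b) : ∫ x in a..b, f' x = f b - f a := by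
  have hreflected : ∫ x in -b..-a, -f' (-x) = f a - f b := by
    refine integral_eq_sub_of_hasDeriv_right_of_le (f := fun x => f (-x)) (neg_le_neg hab)
      (hcont.comp continuous_neg.continuousOn fun x hx => ⟨le_neg.1 hx.2, neg_le.1 hx.1⟩)
      (fun x hx => ?_) ?_ |>.trans (by simp)
    · have := (hderiv (-x) ⟨lt_neg.1 hx.2, neg_lt.1 hx.1⟩).scomp x
        ((hasDerivAt_neg x).hasDerivWithinAt (s := Ioi x)) fun _ hy => neg_lt_neg (mem_Ioi.1 hy)
      simpa only [Function.comp_def, neg_smul, one_smul] using this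
    · exact ((IntervalIntegrable.iff_comp_neg).1 hint).neg.symm
  rwa [integral_neg, integral_comp_neg, neg_neg, neg_neg, neg_eq_iff_eq_neg, neg_sub] at hreflected

namespace ConvexOn

variable {f f' : ℝ → ℝ}

theorem monotone_of_hasDerivWithinAt_Iio (hf : ConvexOn ℝ univ f)
    (hf' : ∀ x, HasDerivWithinAt f (f' x) (Iio x) x) : Monotone f' := by
  have hleft : f' = fun x => derivWithin f (Iio x) x :=
    funext fun x => ((hf' x).derivWithin (uniqueDiffWithinAt_Iio x)).symm
  rw [hleft, ← monotoneOn_univ, ← interior_univ]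
  exact hf.monotoneOn_leftDeriv

theorem integral_eq_sub_of_hasDerivWithinAt_Iio (hf : ConvexOn ℝ univ f)
    (hf' : ∀ x, HasDerivWithinAt f (f' x) (Iio x) x) (a b : ℝ) :
    ∫ x in a..b, f' x = f b - f a := by
  have hint (c d : ℝ) : IntervalIntegrable f' volume c d :=
    (hf.monotone_of_hasDerivWithinAt_Iio hf').intervalIntegrable
  have hcont := hf.locallyLipschitz.continuous
  rcases le_total a b with hab | hba
  · exact intervalIntegral.integral_eq_sub_of_hasDeriv_left_of_le hab hcont.continuousOn
      (fun x _ => hf' x) (hint a b)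
  · rw [intervalIntegral.integral_symm, intervalIntegral.integral_eq_sub_of_hasDeriv_left_of_le
      hba hcont.continuousOn (fun x _ => hf' x) (hint b a), neg_sub]

end ConvexOn

theorem isLocallyFiniteMeasure_of_measure_Ico_ne_top {μ : Measure ℝ}
    (h : ∀ c d, c ≤ d → μ (Ico c d) ≠ ⊤) : IsLocallyFiniteMeasure μ :=
  ⟨fun x => ⟨Ioo (x - 1) (x + 1), Ioo_mem_nhds (by linarith) (by linarith),
    (measure_mono Ioo_subset_Ico_self).trans_lt (h _ _ (by linarith)).lt_top⟩⟩

theorem lintegral_measure_prodMk_preimage_eq {α β : Type*} [MeasurableSpace α]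
    [MeasurableSpace β] {μ : Measure α} {ν : Measure β} [SFinite μ] [SFinite ν]
    {S : Set (α × β)} (hS : MeasurableSet S) :
    ∫⁻ u, ν (Prod.mk u ⁻¹' S) ∂μ = ∫⁻ t, μ ((·, t) ⁻¹' S) ∂ν :=
  (Measure.prod_apply hS).symm.trans (Measure.prod_apply_symm hS)

section Fubini

variable (μ : Measure ℝ) [SFinite μ] (a b : ℝ)

theorem lintegral_Ico_ofReal_sub_right :
    ∫⁻ u in Ico a b, ENNReal.ofReal (b - u) ∂μ = ∫⁻ t in Ioc a b, μ (Ico a t) := by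
  set S : Set (ℝ × ℝ) := {p | p.1 < p.2} ∩ Ico a b ×ˢ Ioc a b
  have hS : MeasurableSet S := (measurableSet_lt measurable_fst measurable_snd).inter
    (measurableSet_Ico.prod measurableSet_Ioc)
  have hsection_left (u : ℝ) :
      volume (Prod.mk u ⁻¹' S) = (Ico a b).indicator (fun u => ENNReal.ofReal (b - u)) u := by
    by_cases hu : u ∈ Ico a b
    · have : Prod.mk u ⁻¹' S = Ioc u b := by ext t; grind
      rw [indicator_of_mem hu, this, Real.volume_Ioc]
    · have : Prod.mk u ⁻¹' S = ∅ := by ext t; grind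
      rw [indicator_of_notMem hu, this, measure_empty]
  have hsection_right (t : ℝ) :
      μ ((·, t) ⁻¹' S) = (Ioc a b).indicator (fun t => μ (Ico a t)) t := by
    by_cases ht : t ∈ Ioc a b
    · have : (·, t) ⁻¹' S = Ico a t := by ext u; grind
      rw [indicator_of_mem ht, this]
    · have : (·, t) ⁻¹' S = ∅ := by ext u; grind
      rw [indicator_of_notMem ht, this, measure_empty]
  rw [← lintegral_indicator measurableSet_Ico, ← lintegral_indicator measurableSet_Ioc]
  simpa only [hsection_left, hsection_right] using
    lintegral_measure_prodMk_preimage_eq (μ := μ) (ν := volume) hS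

theorem lintegral_Ico_ofReal_sub_left :
    ∫⁻ u in Ico a b, ENNReal.ofReal (u - a) ∂μ = ∫⁻ t in Ioc a b, μ (Ico t b) := by
  set S : Set (ℝ × ℝ) := {p | p.2 ≤ p.1} ∩ Ico a b ×ˢ Ioc a b
  have hS : MeasurableSet S := (measurableSet_le measurable_snd measurable_fst).inter
    (measurableSet_Ico.prod measurableSet_Ioc)
  have hsection_left (u : ℝ) :
      volume (Prod.mk u ⁻¹' S) = (Ico a b).indicator (fun u => ENNReal.ofReal (u - a)) u := by
    by_cases hu : u ∈ Ico a b
    · have : Prod.mk u ⁻¹' S = Ioc a u := by ext t; grind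
      rw [indicator_of_mem hu, this, Real.volume_Ioc]
    · have : Prod.mk u ⁻¹' S = ∅ := by ext t; grind
      rw [indicator_of_notMem hu, this, measure_empty]
  have hsection_right (t : ℝ) :
      μ ((·, t) ⁻¹' S) = (Ioc a b).indicator (fun t => μ (Ico t b)) t := by
    by_cases ht : t ∈ Ioc a b
    · have : (·, t) ⁻¹' S = Ico t b := by ext u; grind
      rw [indicator_of_mem ht, this]
    · have : (·, t) ⁻¹' S = ∅ := by ext u; grind
      rw [indicator_of_notMem ht, this, measure_empty]
  rw [← lintegral_indicator measurableSet_Ico, ← lintegral_indicator measurableSet_Ioc]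
  simpa only [hsection_left, hsection_right] using
    lintegral_measure_prodMk_preimage_eq (μ := μ) (ν := volume) hS

end Fubini

section Stieltjes

variable {μ : Measure ℝ} [SFinite μ] {g : ℝ → ℝ} {a b : ℝ}

theorem setIntegral_Ico_sub_right_eq (hg : Monotone g)
    (hμ : ∀ c d, c ≤ d → μ (Ico c d) = ENNReal.ofReal (g d - g c)) (hab : a ≤ b) :
    ∫ u in Ico a b, (b - u) ∂μ = ∫ t in a..b, (g t - g a) := by
  rw [intervalIntegral.integral_of_le hab, integral_eq_lintegral_of_nonneg_ae,
    integral_eq_lintegral_of_nonneg_ae, lintegral_Ico_ofReal_sub_right]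
  · exact congrArg ENNReal.toReal
      (setLIntegral_congr_fun measurableSet_Ioc fun t ht => hμ a t ht.1.le)
  · exact (ae_restrict_iff' measurableSet_Ioc).2
      (ae_of_all _ fun t ht => sub_nonneg.2 (hg ht.1.le))
  · exact (hg.measurable.sub_const _).aestronglyMeasurable
  · exact (ae_restrict_iff' measurableSet_Ico).2
      (ae_of_all _ fun u hu => sub_nonneg.2 hu.2.le)
  · exact (measurable_const.sub measurable_id).aestronglyMeasurable

theorem setIntegral_Ico_sub_left_eq (hg : Monotone g)
    (hμ : ∀ c d, c ≤ d → μ (Ico c d) = ENNReal.ofReal (g d - g c)) (hab : a ≤ b) :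
    ∫ u in Ico a b, (u - a) ∂μ = ∫ t in a..b, (g b - g t) := by
  rw [intervalIntegral.integral_of_le hab, integral_eq_lintegral_of_nonneg_ae,
    integral_eq_lintegral_of_nonneg_ae, lintegral_Ico_ofReal_sub_left]
  · exact congrArg ENNReal.toReal
      (setLIntegral_congr_fun measurableSet_Ioc fun t ht => hμ t b ht.2)
  · exact (ae_restrict_iff' measurableSet_Ioc).2
      (ae_of_all _ fun t ht => sub_nonneg.2 (hg ht.2))
  · exact (hg.measurable.const_sub _).aestronglyMeasurable
  · exact (ae_restrict_iff' measurableSet_Ico).2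
      (ae_of_all _ fun u hu => sub_nonneg.2 hu.1)
  · exact (measurable_id.sub measurable_const).aestronglyMeasurable

end Stieltjes

/-- For a convex `f : ℝ → ℝ` with left derivative `f'` and second derivative measure `μ`
(satisfying `μ([c,d)) = f'(d) − f'(c)` for `c ≤ d`), one has for all `a, b` (not necessarily
ordered): `f(b) − f(a) = f'(a)(b−a) + ∫_ℝ 1_{[a∧b, a∨b)}(u) |b−u| μ(du)`. -/
theorem convex_taylor_left_deriv_unordered
    (f f' : ℝ → ℝ) (μ : Measure ℝ)
    (hf : ConvexOn ℝ Set.univ f)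
    (hf' : ∀ y : ℝ, HasDerivWithinAt f (f' y) (Set.Iio y) y)
    (hμ : ∀ c d : ℝ, c ≤ d → μ (Set.Ico c d) = ENNReal.ofReal (f' d - f' c)) :
    ∀ a b : ℝ,
      f b - f a = f' a * (b - a) +
        ∫ u, (Set.Ico (min a b) (max a b)).indicator (fun v => |b - v|) u ∂μ := by
  intro a b
  have hmono := hf.monotone_of_hasDerivWithinAt_Iio hf'
  have hftc := hf.integral_eq_sub_of_hasDerivWithinAt_Iio hf'
  have hint (c d : ℝ) : IntervalIntegrable f' volume c d := hmono.intervalIntegrable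
  have := isLocallyFiniteMeasure_of_measure_Ico_ne_top fun c d hcd =>
    (hμ c d hcd).trans_ne ENNReal.ofReal_ne_top
  rw [integral_indicator measurableSet_Ico]
  rcases le_total a b with hab | hba
  · rw [min_eq_left hab, max_eq_right hab,
      setIntegral_congr_fun measurableSet_Ico fun u hu => abs_of_nonneg (sub_nonneg.2 hu.2.le),
      setIntegral_Ico_sub_right_eq hmono hμ hab,
      intervalIntegral.integral_sub (hint a b) intervalIntegrable_const, hftc,
      intervalIntegral.integral_const, smul_eq_mul]
    ring
  · rw [min_eq_right hba, max_eq_left hba,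
      setIntegral_congr_fun measurableSet_Ico fun u hu =>
        (abs_of_nonpos (sub_nonpos.2 hu.1)).trans (neg_sub b u),
      setIntegral_Ico_sub_left_eq hmono hμ hba,
      intervalIntegral.integral_sub intervalIntegrable_const (hint b a), hftc,
      intervalIntegral.integral_const, smul_eq_mul]
    ring
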